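/- arXiv:1905.11823 — 2 statements merged into one kernel-verified Lean document; each statement's English description precedes it below -/
import Mathlib

section
/- Let (X,d) be a metric space and I : X → ℝ a continuous function, regarded also as a proper lower semicontinuous functional with epigraph extension G_I on (epi(I), d_epi). Then for every x ∈ X: |dG_I|(x,I(x)) = |dI|(x)/√(1 + |dI|(x)²) if |dI|(x) < ∞, and |dG_I|(x,I(x)) = 1 if |dI|(x) = ∞; moreover |dG_I|(x,ξ) = 1 whenever ξ > I(x). -/
open Set Metric Filter
open scoped ENNReal Topology

/-- A point `x` is a `δ`-regular point of the (continuous) function `J`: there are a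
neighbourhood `U` of `x`, a constant `α > 0` and a continuous map `ψ : U × [0,α] → Y` with
`d(ψ(u,t),u) ≤ t` and `J(u) - J(ψ(u,t)) ≥ δ t`. -/
def IsDeltaRegular {Y : Type*} [MetricSpace Y] (J : Y → ℝ) (x : Y) (δ : ℝ) : Prop :=
  ∃ U ∈ 𝓝 x, ∃ α : ℝ, 0 < α ∧ ∃ ψ : Y → ℝ → Y,
    ContinuousOn (fun p : Y × ℝ => ψ p.1 p.2) (U ×ˢ Icc 0 α) ∧
    ∀ u ∈ U, ∀ t ∈ Icc (0:ℝ) α, dist (ψ u t) u ≤ t ∧ δ * t ≤ J u - J (ψ u t)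

/-- The weak metric slope `|dJ|(x)` of a (continuous) function `J` at `x`: the supremum of all
`δ > 0` such that `x` is a `δ`-regular point of `J` (equal to `0` if there is no such `δ`). -/
noncomputable def weakSlope {Y : Type*} [MetricSpace Y] (J : Y → ℝ) (x : Y) : ℝ≥0∞ :=
  ⨆ δ ∈ {δ : ℝ | 0 < δ ∧ IsDeltaRegular J x δ}, ENNReal.ofReal δ

/-- The weak metric Palais–Smale condition: every sequence along which `J` converges to a real
number and the weak metric slope tends to `0` has a convergent subsequence. -/
def WeakPalaisSmale {Y : Type*} [MetricSpace Y] (J : Y → ℝ) : Prop :=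
  ∀ (u : ℕ → Y) (c : ℝ),
    Tendsto (fun n => J (u n)) atTop (𝓝 c) →
    Tendsto (fun n => weakSlope J (u n)) atTop (𝓝 0) →
    ∃ (y : Y) (φ : ℕ → ℕ), StrictMono φ ∧ Tendsto (u ∘ φ) atTop (𝓝 y)

/-- The epigraph `epi(I) = {(u,ξ) : I(u) ≤ ξ}` of a functional `I : X → ℝ ∪ {+∞}`, equipped
(via `WithLp 2`) with the graph metric `d_epi((u,ξ),(v,ζ)) = √(d(u,v)² + |ξ-ζ|²)`. -/
abbrev Epi {X : Type*} [MetricSpace X] (I : X → EReal) : Type _ :=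
  {p : WithLp 2 (X × ℝ) //
    I ((WithLp.equiv 2 (X × ℝ)) p).1 ≤ ((((WithLp.equiv 2 (X × ℝ)) p).2 : ℝ) : EReal)}

/-- The point of an epigraph element `(u, ξ)` of the epigraph of `I`. -/
noncomputable def Epi.pt {X : Type*} [MetricSpace X] {I : X → EReal} (p : Epi I) : X :=
  ((WithLp.equiv 2 (X × ℝ)) p.1).1

/-- Build an element of the epigraph of `I` from `x : X` and `ξ : ℝ` with `I x ≤ ξ`. -/
noncomputable def Epi.mk' {X : Type*} [MetricSpace X] (I : X → EReal) (x : X) (ξ : ℝ)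
    (h : I x ≤ (ξ : EReal)) : Epi I :=
  ⟨(WithLp.equiv 2 (X × ℝ)).symm (x, ξ), by simpa using h⟩

/-- The epigraph extension `G_I : epi(I) → ℝ`, `G_I(u,ξ) = ξ`. -/
noncomputable def epiExt {X : Type*} [MetricSpace X] (I : X → EReal) (p : Epi I) : ℝ :=
  ((WithLp.equiv 2 (X × ℝ)) p.1).2

/-- The weak metric slope `|dI|(x)` of a proper lower semicontinuous functional
`I : X → ℝ ∪ {+∞}` at a point `x ∈ D(I)`, defined through the weak metric slope of the
epigraph extension `G_I` at `(x, I(x))`. -/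
noncomputable def lscWeakSlope {X : Type*} [MetricSpace X] (I : X → EReal) (x : X) : ℝ≥0∞ :=
  if hx : I x ≤ (((I x).toReal : ℝ) : EReal) then
    let s := weakSlope (epiExt I) (Epi.mk' I x (I x).toReal hx)
    if s < 1 then ENNReal.ofReal (s.toReal / Real.sqrt (1 - s.toReal ^ 2)) else ⊤
  else ⊤

/-- The weak metric Palais–Smale condition for a proper l.s.c. functional `I : X → ℝ ∪ {+∞}`. -/
def WeakPalaisSmaleLSC {X : Type*} [MetricSpace X] (I : X → EReal) : Prop :=
  ∀ (u : ℕ → X) (c : ℝ),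
    Tendsto (fun n => I (u n)) atTop (𝓝 ((c : EReal))) →
    Tendsto (fun n => lscWeakSlope I (u n)) atTop (𝓝 0) →
    ∃ (y : X) (φ : ℕ → ℕ), StrictMono φ ∧ Tendsto (u ∘ φ) atTop (𝓝 y)

/-- The (strong) metric slope `|∂J|(x) = limsup_{y → x} (J(x) - J(y))₊ / d(x,y)` of a
real-valued function. -/
noncomputable def metricSlopeReal {Y : Type*} [MetricSpace Y] (J : Y → ℝ) (x : Y) : ℝ≥0∞ :=
  limsup (fun y => ENNReal.ofReal (max (J x - J y) 0 / dist x y)) (𝓝[≠] x)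

/-- The (strong) metric slope of a functional `I : X → ℝ ∪ {+∞}`, equal to `+∞` outside of the
domain of `I`. -/
noncomputable def metricSlope {X : Type*} [MetricSpace X] (I : X → EReal) (x : X) : ℝ≥0∞ :=
  if I x = ⊤ then ⊤
  else limsup (fun y => ENNReal.ofReal ((max (I x - I y) 0).toReal / dist x y)) (𝓝[≠] x)

/-- `γ : [0,1] → Y` is a unit speed minimising geodesic from `x₀` to `x₁`. -/
def IsUnitSpeedGeodesic {Y : Type*} [MetricSpace Y] (γ : ℝ → Y) (x₀ x₁ : Y) : Prop :=
  ContinuousOn γ (Icc 0 1) ∧ γ 0 = x₀ ∧ γ 1 = x₁ ∧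
    ∀ s ∈ Icc (0:ℝ) 1, ∀ t ∈ Icc (0:ℝ) 1, dist (γ s) (γ t) = |s - t| * dist x₀ x₁

/-- A geodesic metric space: any two points are joined by a unit speed minimising geodesic. -/
def IsGeodesicSpace (Y : Type*) [MetricSpace Y] : Prop :=
  ∀ x₀ x₁ : Y, ∃ γ : ℝ → Y, IsUnitSpeedGeodesic γ x₀ x₁

/-- `I` is `λ`-geodesically convex. -/
def GeodesicallyConvex {X : Type*} [MetricSpace X] (I : X → EReal) (lam : ℝ) : Prop :=
  ∀ x₀ x₁ : X, I x₀ ≠ ⊤ → I x₁ ≠ ⊤ →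
    ∀ γ : ℝ → X, IsUnitSpeedGeodesic γ x₀ x₁ → ∀ t ∈ Icc (0:ℝ) 1,
      I (γ t) ≤ ((1 - t : ℝ) : EReal) * I x₀ + ((t : ℝ) : EReal) * I x₁
        - (((lam / 2) * t * (1 - t) * dist x₀ x₁ ^ 2 : ℝ) : EReal)

/-!
A deformation `ψ` of `X` that lowers `I` at rate `δ` lifts to the epigraph: move the point
along `ψ` and lower the level at rate `δ`. The lifted displacement is `√(1 + δ²) t`, so after
reparametrising by arc length the level drops at rate `δ / √(1 + δ²)`. Conversely, a
deformation of the epigraph at `(x, I x)` lowering the level at rate `δ / √(1 + δ²)` spends at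
most a `1 / √(1 + δ²)` fraction of its displacement horizontally, and projects to a deformation
of `X` lowering `I` at rate `δ`. Since `G_I` is `1`-Lipschitz its slope is at most `1`, and
strictly above the graph the level can be lowered vertically at rate `1`. As
`δ ↦ δ / √(1 + δ²)` is an increasing bijection of `[0, ∞)` onto `[0, 1)`, the correspondence
of regular constants carries the supremum `|dI|(x)` to `|dG_I|(x, I x)`.
-/

section Regularity

variable {Y : Type*} [MetricSpace Y] {J : Y → ℝ} {y : Y} {δ δ' : ℝ}

theorem IsDeltaRegular.mono (h : IsDeltaRegular J y δ) (hle : δ' ≤ δ) :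
    IsDeltaRegular J y δ' := by
  obtain ⟨U, hU, α, hα, ψ, hψc, hψ⟩ := h
  refine ⟨U, hU, α, hα, ψ, hψc, fun u hu t ht => ⟨(hψ u hu t ht).1, ?_⟩⟩
  exact (mul_le_mul_of_nonneg_right hle ht.1).trans (hψ u hu t ht).2

theorem IsDeltaRegular.le_of_lipschitzWith {K : NNReal} (hJ : LipschitzWith K J)
    (h : IsDeltaRegular J y δ) : δ ≤ K := by
  obtain ⟨U, hU, α, hα, ψ, -, hψ⟩ := h
  obtain ⟨hdist, hdrop⟩ := hψ y (mem_of_mem_nhds hU) α ⟨hα.le, le_rfl⟩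
  have hlip : J y - J (ψ y α) ≤ K * α :=
    calc J y - J (ψ y α) ≤ dist (J (ψ y α)) (J y) := by
          rw [Real.dist_eq, abs_sub_comm]; exact le_abs_self _
      _ ≤ K * dist (ψ y α) y := hJ.dist_le_mul _ _
      _ ≤ K * α := mul_le_mul_of_nonneg_left hdist K.coe_nonneg
  exact le_of_mul_le_mul_right (hdrop.trans hlip) hα

theorem ofReal_le_weakSlope (h : IsDeltaRegular J y δ) : ENNReal.ofReal δ ≤ weakSlope J y := by
  rcases le_or_gt δ 0 with hδ | hδ
  · simp [ENNReal.ofReal_of_nonpos hδ]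
  · exact le_biSup (fun δ => ENNReal.ofReal δ) (show δ ∈ {δ : ℝ | 0 < δ ∧ IsDeltaRegular J y δ}
      from ⟨hδ, h⟩)

theorem weakSlope_le {b : ℝ≥0∞} (h : ∀ δ, 0 < δ → IsDeltaRegular J y δ → ENNReal.ofReal δ ≤ b) :
    weakSlope J y ≤ b :=
  iSup₂_le fun δ hδ => h δ hδ.1 hδ.2

theorem isDeltaRegular_of_ofReal_lt_weakSlope (h : ENNReal.ofReal δ < weakSlope J y) :
    IsDeltaRegular J y δ := by
  by_contra hreg
  refine h.not_ge (weakSlope_le fun δ' _ hδ' => ENNReal.ofReal_le_ofReal ?_)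
  by_contra! hlt
  exact hreg (hδ'.mono hlt.le)

theorem weakSlope_le_of_lipschitzWith {K : NNReal} (hJ : LipschitzWith K J) :
    weakSlope J y ≤ K :=
  weakSlope_le fun _ _ h => by simpa using ENNReal.ofReal_le_ofReal (h.le_of_lipschitzWith hJ)

end Regularity

section Epigraph

variable {X : Type*} [MetricSpace X]

@[simp]
theorem Epi.pt_mk' (I : X → EReal) (x : X) (ξ : ℝ) (h : I x ≤ ξ) : (Epi.mk' I x ξ h).pt = x :=
  rfl

@[simp]
theorem epiExt_mk' (I : X → EReal) (x : X) (ξ : ℝ) (h : I x ≤ ξ) :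
    epiExt I (Epi.mk' I x ξ h) = ξ :=
  rfl

variable {I : X → EReal}

theorem Epi.dist_eq (p q : Epi I) :
    dist p q = √(dist p.pt q.pt ^ 2 + (epiExt I p - epiExt I q) ^ 2) := by
  rw [Subtype.dist_eq, WithLp.prod_dist_eq_add (p := 2) (by norm_num), Real.sqrt_eq_rpow]
  norm_num [Real.dist_eq, sq_abs]
  rfl

theorem Epi.dist_le_iff {p q : Epi I} {s : ℝ} (hs : 0 ≤ s) :
    dist p q ≤ s ↔ dist p.pt q.pt ^ 2 + (epiExt I p - epiExt I q) ^ 2 ≤ s ^ 2 := by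
  rw [Epi.dist_eq, Real.sqrt_le_left hs]

theorem Epi.lipschitzWith_pt : LipschitzWith 1 (Epi.pt : Epi I → X) :=
  LipschitzWith.of_dist_le_mul fun p q => by
    rw [NNReal.coe_one, one_mul, Epi.dist_eq]
    exact Real.le_sqrt_of_sq_le (le_add_of_nonneg_right (sq_nonneg _))

theorem lipschitzWith_epiExt : LipschitzWith 1 (epiExt I) :=
  LipschitzWith.of_dist_le_mul fun p q => by
    rw [NNReal.coe_one, one_mul, Epi.dist_eq, Real.dist_eq]
    exact Real.abs_le_sqrt (le_add_of_nonneg_left (sq_nonneg _))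

theorem continuousOn_epiMk' {Z : Type*} [TopologicalSpace Z] {v : Z → X} {ζ : Z → ℝ}
    {s : Set Z} (hv : ContinuousOn v s) (hζ : ContinuousOn ζ s) (h : ∀ z, I (v z) ≤ ζ z) :
    ContinuousOn (fun z => Epi.mk' I (v z) (ζ z) (h z)) s := by
  rw [(Topology.IsInducing.induced (Subtype.val : Epi I → WithLp 2 (X × ℝ))).continuousOn_iff]
  exact (WithLp.prod_continuous_toLp 2 X ℝ).comp_continuousOn (hv.prodMk hζ)

theorem weakSlope_epiExt_le_one (p : Epi I) : weakSlope (epiExt I) p ≤ 1 :=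
  ENNReal.coe_one ▸ weakSlope_le_of_lipschitzWith lipschitzWith_epiExt

end Epigraph

theorem div_sqrt_one_add_sq_lt_one (δ : ℝ) : δ / √(1 + δ ^ 2) < 1 := by
  rw [div_lt_one (by positivity)]
  exact (le_abs_self δ).trans_lt ((Real.lt_sqrt (abs_nonneg δ)).2 (by rw [sq_abs]; linarith))

theorem strictMono_div_sqrt_one_add_sq : StrictMono fun δ : ℝ => δ / √(1 + δ ^ 2) := by
  intro a b hab
  have hA : √(1 + a ^ 2) ^ 2 = 1 + a ^ 2 := Real.sq_sqrt (by positivity)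
  have hB : √(1 + b ^ 2) ^ 2 = 1 + b ^ 2 := Real.sq_sqrt (by positivity)
  have hA0 : 0 < √(1 + a ^ 2) := by positivity
  have hB0 : 0 < √(1 + b ^ 2) := by positivity
  dsimp only
  rw [div_lt_div_iff₀ hA0 hB0]
  -- with `A, B` the two roots, `(bA - aB)(bA + aB) = b² - a²` and `bA + aB` has the sign of
  -- `b² - a²`
  rcases le_or_gt 0 a with ha | ha
  · nlinarith [mul_pos hA0 hB0, mul_nonneg ha hB0.le, mul_pos (ha.trans_lt hab) hA0]
  rcases le_or_gt 0 b with hb | hb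
  · nlinarith [mul_pos hA0 hB0, mul_neg_of_neg_of_pos ha hB0, mul_nonneg hb hA0.le]
  · nlinarith [mul_pos hA0 hB0, mul_neg_of_neg_of_pos ha hB0, mul_neg_of_neg_of_pos hb hA0]

theorem exists_div_sqrt_one_add_sq_eq {y : ℝ} (hy0 : 0 ≤ y) (hy1 : y < 1) :
    ∃ δ, 0 ≤ δ ∧ δ / √(1 + δ ^ 2) = y := by
  have hc : 0 < √(1 - y ^ 2) := Real.sqrt_pos.2 (by nlinarith)
  have hc2 : √(1 - y ^ 2) ^ 2 = 1 - y ^ 2 := Real.sq_sqrt (by nlinarith)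
  refine ⟨y / √(1 - y ^ 2), by positivity, ?_⟩
  have h : 1 + (y / √(1 - y ^ 2)) ^ 2 = (1 / √(1 - y ^ 2)) ^ 2 := by
    field_simp
    linarith
  rw [h, Real.sqrt_sq (by positivity)]
  field_simp

section RealEpigraph

variable {X : Type*} [MetricSpace X] {I : X → ℝ}

theorem Epi.apply_pt_le_epiExt (p : Epi fun y => (I y : EReal)) : I p.pt ≤ epiExt _ p :=
  EReal.coe_le_coe_iff.1 p.2

theorem continuous_epiMk'_graph (hI : Continuous I) :
    Continuous fun u => Epi.mk' (fun y => (I y : EReal)) u (I u) le_rfl :=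
  continuousOn_univ.1 (continuousOn_epiMk' continuousOn_id hI.continuousOn _)

theorem isDeltaRegular_epiExt_of_isDeltaRegular (hI : Continuous I) {x : X} {δ : ℝ}
    (h : IsDeltaRegular I x δ) {p₀ : Epi fun y => (I y : EReal)} (hp₀ : p₀.pt = x) :
    IsDeltaRegular (epiExt fun y => (I y : EReal)) p₀ (δ / √(1 + δ ^ 2)) := by
  obtain ⟨U, hU, α, hα, ψ, hψc, hψ⟩ := h
  set k := √(1 + δ ^ 2)
  have hk : 0 < k := by positivity
  have hk2 : k ^ 2 = 1 + δ ^ 2 := Real.sq_sqrt (by positivity)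
  have hmaps : MapsTo (fun q : (Epi fun y => (I y : EReal)) × ℝ => (q.1.pt, q.2 / k))
      ((Epi.pt ⁻¹' U) ×ˢ Icc 0 (α * k)) (U ×ˢ Icc 0 α) := fun q ⟨hq, hs0, hsα⟩ =>
    ⟨hq, div_nonneg hs0 hk.le, (div_le_iff₀ hk).2 hsα⟩
  -- move the point along `ψ` at speed `1 / k`, and the level down at speed `δ / k`
  refine ⟨Epi.pt ⁻¹' U, Epi.lipschitzWith_pt.continuous.continuousAt.preimage_mem_nhds (hp₀ ▸ hU),
    α * k, by positivity, fun p s => Epi.mk' _ (ψ p.pt (s / k))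
      (max (I (ψ p.pt (s / k))) (epiExt _ p - δ * (s / k))) (EReal.coe_le_coe (le_max_left _ _)),
    ?_, ?_⟩
  · have hψk : ContinuousOn (fun q : (Epi fun y => (I y : EReal)) × ℝ => ψ q.1.pt (q.2 / k))
        ((Epi.pt ⁻¹' U) ×ˢ Icc 0 (α * k)) :=
      hψc.comp ((Epi.lipschitzWith_pt.continuous.comp continuous_fst).prodMk
        (continuous_snd.div_const k)).continuousOn hmaps
    exact continuousOn_epiMk' hψk ((hI.comp_continuousOn hψk).sup
      ((lipschitzWith_epiExt.continuous.comp continuous_fst).sub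
        (continuous_const.mul (continuous_snd.div_const k))).continuousOn) _
  · rintro p hp s ⟨hs0, hsα⟩
    obtain ⟨hdist, hdrop⟩ := hψ p.pt hp (s / k) (hmaps (x := (p, s)) ⟨hp, hs0, hsα⟩).2
    have hmax : max (I (ψ p.pt (s / k))) (epiExt _ p - δ * (s / k)) = epiExt _ p - δ * (s / k) :=
      max_eq_right (by linarith [p.apply_pt_le_epiExt])
    refine ⟨(Epi.dist_le_iff hs0).2 ?_, ?_⟩ <;> simp only [Epi.pt_mk', epiExt_mk', hmax]
    · have hdist2 : dist (ψ p.pt (s / k)) p.pt ^ 2 ≤ (s / k) ^ 2 :=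
        pow_le_pow_left₀ dist_nonneg hdist 2
      have hs2 : s ^ 2 = (s / k) ^ 2 * (1 + δ ^ 2) := by rw [← hk2]; field_simp
      nlinarith
    · linarith [show δ / k * s = δ * (s / k) by ring]

theorem isDeltaRegular_of_isDeltaRegular_epiExt (hI : Continuous I) {x : X} {δ : ℝ} (hδ : 0 ≤ δ)
    (h : IsDeltaRegular (epiExt fun y => (I y : EReal)) (Epi.mk' _ x (I x) le_rfl)
      (δ / √(1 + δ ^ 2))) :
    IsDeltaRegular I x δ := by
  obtain ⟨U, hU, α, hα, Ψ, hΨc, hΨ⟩ := h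
  set k := √(1 + δ ^ 2)
  have hk : 0 < k := by positivity
  have hk2 : k ^ 2 = 1 + δ ^ 2 := Real.sq_sqrt (by positivity)
  set graph := fun u => Epi.mk' (fun y => (I y : EReal)) u (I u) le_rfl
  have hmaps : MapsTo (fun q : X × ℝ => (graph q.1, q.2 * k))
      ((graph ⁻¹' U) ×ˢ Icc 0 (α / k)) (U ×ˢ Icc 0 α) := fun q ⟨hq, ht0, htα⟩ =>
    ⟨hq, mul_nonneg ht0 hk.le, (le_div_iff₀ hk).1 htα⟩
  refine ⟨graph ⁻¹' U, (continuous_epiMk'_graph hI).continuousAt.preimage_mem_nhds hU, α / k,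
    by positivity, fun u t => (Ψ (graph u) (t * k)).pt, ?_, ?_⟩
  · exact Epi.lipschitzWith_pt.continuous.comp_continuousOn (hΨc.comp
      (((continuous_epiMk'_graph hI).comp continuous_fst).prodMk
        (continuous_snd.mul continuous_const)).continuousOn hmaps)
  · rintro u hu t ⟨ht0, htα⟩
    obtain ⟨hdist, hdrop⟩ := hΨ _ hu (t * k) (hmaps (x := (u, t)) ⟨hu, ht0, htα⟩).2
    set q := Ψ (graph u) (t * k)
    rw [Epi.dist_le_iff (by positivity)] at hdist
    simp only [graph, Epi.pt_mk', epiExt_mk'] at hdist hdrop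
    have hδt : δ / k * (t * k) = δ * t := by field_simp
    have hδt0 : 0 ≤ δ * t := mul_nonneg hδ ht0
    rw [hδt] at hdrop
    refine ⟨?_, by linarith [q.apply_pt_le_epiExt]⟩
    -- the level drops by at least `δ t`, which leaves at most `t` for the horizontal displacement
    have hdist2 : dist q.pt u ^ 2 ≤ t ^ 2 := by
      rw [mul_pow, hk2] at hdist
      nlinarith
    exact pow_le_pow_iff_left₀ dist_nonneg ht0 two_ne_zero |>.1 hdist2

theorem isDeltaRegular_epiExt_iff (hI : Continuous I) {x : X} {δ : ℝ} (hδ : 0 ≤ δ) :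
    IsDeltaRegular (epiExt fun y => (I y : EReal)) (Epi.mk' _ x (I x) le_rfl)
      (δ / √(1 + δ ^ 2)) ↔ IsDeltaRegular I x δ :=
  ⟨isDeltaRegular_of_isDeltaRegular_epiExt hI hδ,
    fun h => isDeltaRegular_epiExt_of_isDeltaRegular hI h rfl⟩

theorem isDeltaRegular_one_epiExt_of_lt (hI : Continuous I) {p₀ : Epi fun y => (I y : EReal)}
    (hp₀ : I p₀.pt < epiExt _ p₀) : IsDeltaRegular (epiExt fun y => (I y : EReal)) p₀ 1 := by
  set α := (epiExt _ p₀ - I p₀.pt) / 2 with hα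
  have hpt := (Epi.lipschitzWith_pt (I := fun y => (I y : EReal))).continuous
  have hext := (lipschitzWith_epiExt (I := fun y => (I y : EReal))).continuous
  -- near `p₀` the level stays `α` above the graph, so it can be lowered vertically at unit speed
  refine ⟨{p | I p.pt + α < epiExt _ p},
    (isOpen_lt ((hI.comp hpt).add continuous_const) hext).mem_nhds
      (show I p₀.pt + α < epiExt _ p₀ by linarith), α, by linarith,
    fun p s => Epi.mk' _ p.pt (max (I p.pt) (epiExt _ p - s)) (EReal.coe_le_coe (le_max_left _ _)),
    ?_, ?_⟩
  · exact continuousOn_epiMk' (hpt.comp continuous_fst).continuousOn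
      ((hI.comp (hpt.comp continuous_fst)).max
        ((hext.comp continuous_fst).sub continuous_snd)).continuousOn _
  · rintro p hp s ⟨hs0, hsα⟩
    have hmax : max (I p.pt) (epiExt _ p - s) = epiExt _ p - s :=
      max_eq_right (by linarith [show I p.pt + α < epiExt _ p from hp])
    refine ⟨(Epi.dist_le_iff hs0).2 ?_, ?_⟩ <;> simp only [Epi.pt_mk', epiExt_mk', hmax] <;>
      norm_num

end RealEpigraph

section Slope

variable {X : Type*} [MetricSpace X] {I : X → ℝ} {x : X}

theorem weakSlope_epiExt_le (hI : Continuous I) {σ : ℝ} (hσ : 0 ≤ σ)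
    (h : weakSlope I x ≤ ENNReal.ofReal σ) :
    weakSlope (epiExt fun y => (I y : EReal)) (Epi.mk' _ x (I x) le_rfl) ≤
      ENNReal.ofReal (σ / √(1 + σ ^ 2)) := by
  refine weakSlope_le fun ε _ hε =>
    ENNReal.ofReal_le_ofReal (le_of_forall_lt_imp_le_of_dense fun c hc => ?_)
  rcases le_or_gt c 0 with hc0 | hc0
  · exact hc0.trans (by positivity)
  have hε1 : ε ≤ 1 := by simpa using hε.le_of_lipschitzWith lipschitzWith_epiExt
  obtain ⟨δ, hδ, rfl⟩ := exists_div_sqrt_one_add_sq_eq hc0.le (hc.trans_le hε1)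
  have hreg : IsDeltaRegular I x δ := (isDeltaRegular_epiExt_iff hI hδ).1 (hε.mono hc.le)
  have hδσ : δ ≤ σ := (ENNReal.ofReal_le_ofReal_iff hσ).1 ((ofReal_le_weakSlope hreg).trans h)
  exact strictMono_div_sqrt_one_add_sq.monotone hδσ

theorem le_weakSlope_epiExt (hI : Continuous I) {b : ℝ≥0∞} (hb : b ≤ 1)
    (h : ∀ δ, 0 ≤ δ → ENNReal.ofReal (δ / √(1 + δ ^ 2)) < b → ENNReal.ofReal δ < weakSlope I x) :
    b ≤ weakSlope (epiExt fun y => (I y : EReal)) (Epi.mk' _ x (I x) le_rfl) := by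
  refine le_of_forall_lt fun c hc => ?_
  obtain ⟨r, hr0, hcr, hrb⟩ := ENNReal.lt_iff_exists_real_btwn.1 hc
  obtain ⟨δ, hδ, rfl⟩ :=
    exists_div_sqrt_one_add_sq_eq hr0 (ENNReal.ofReal_lt_one.1 (hrb.trans_le hb))
  have hreg : IsDeltaRegular I x δ := isDeltaRegular_of_ofReal_lt_weakSlope (h δ hδ hrb)
  exact hcr.trans_le (ofReal_le_weakSlope ((isDeltaRegular_epiExt_iff hI hδ).2 hreg))

end Slope

/-- Relation between the weak metric slope of a continuous function `I : X → ℝ` and the weak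
metric slope of its epigraph extension `G_I` (Proposition 2.3 of Degiovanni–Marzocchi):
`|dG_I|(x, I x) = |dI|(x)/√(1+|dI|(x)²)` when `|dI|(x) < ∞`, `|dG_I|(x, I x) = 1` when
`|dI|(x) = ∞` and `|dG_I|(x, ξ) = 1` whenever `ξ > I x`. -/
theorem weakSlope_epiExt_of_continuous {X : Type*} [MetricSpace X]
    (I : X → ℝ) (hI : Continuous I) (x : X) :
    (weakSlope I x ≠ ⊤ →
      weakSlope (epiExt (fun y => ((I y : ℝ) : EReal)))
          (Epi.mk' (fun y => ((I y : ℝ) : EReal)) x (I x) le_rfl)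
        = ENNReal.ofReal
            ((weakSlope I x).toReal / Real.sqrt (1 + (weakSlope I x).toReal ^ 2))) ∧
    (weakSlope I x = ⊤ →
      weakSlope (epiExt (fun y => ((I y : ℝ) : EReal)))
          (Epi.mk' (fun y => ((I y : ℝ) : EReal)) x (I x) le_rfl) = 1) ∧
    (∀ ξ : ℝ, ∀ hξ : I x < ξ,
      weakSlope (epiExt (fun y => ((I y : ℝ) : EReal)))
          (Epi.mk' (fun y => ((I y : ℝ) : EReal)) x ξ (by show ((I x : ℝ) : EReal) ≤ ((ξ : ℝ) : EReal); exact_mod_cast hξ.le)) = 1) := by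
  refine ⟨fun hfin => ?_, fun htop => ?_, fun ξ hξ => ?_⟩
  · set σ := (weakSlope I x).toReal
    have hσ : weakSlope I x = ENNReal.ofReal σ := (ENNReal.ofReal_toReal hfin).symm
    refine le_antisymm (weakSlope_epiExt_le hI ENNReal.toReal_nonneg hσ.le)
      (le_weakSlope_epiExt hI (ENNReal.ofReal_le_one.2 (div_sqrt_one_add_sq_lt_one σ).le)
        fun δ hδ hlt => ?_)
    rw [ENNReal.ofReal_lt_ofReal_iff_of_nonneg (by positivity)] at hlt
    rw [hσ, ENNReal.ofReal_lt_ofReal_iff_of_nonneg hδ]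
    exact strictMono_div_sqrt_one_add_sq.lt_iff_lt.1 hlt
  · exact le_antisymm (weakSlope_epiExt_le_one _)
      (le_weakSlope_epiExt hI le_rfl fun δ _ _ => htop ▸ ENNReal.ofReal_lt_top)
  · exact le_antisymm (weakSlope_epiExt_le_one _)
      (by simpa using ofReal_le_weakSlope
            (isDeltaRegular_one_epiExt_of_lt hI (p₀ := Epi.mk' _ x ξ _) hξ))
end

section
/- Let (X,d) be a compact geodesic metric space and I : X → ℝ ∪ {+∞} a proper, lower semicontinuous, λ-geodesically convex functional. Suppose μ ∈ D(I) is a strict local minimum of I (i.e. there is R > 0 with I(η) > I(μ) for all η ≠ μ with d(η,μ) ≤ R), and ν ∈ D(I), ν ≠ μ, satisfies I(ν) ≤ I(μ). Then there exists μ* ∈ X, distinct from μ and ν, such that |∂I|(μ*) = |dI|(μ*) = 0 and I(μ*) = c, where c = inf_{γ∈Γ} sup_{t∈[0,1]} I(γ(t)) > I(μ) and Γ is the set of continuous curves γ : [0,1] → X with γ(0) = μ, γ(1) = ν. (This is the abstract form of the paper's Theorem 1.2, which applies in particular to the McKean–Vlasov free energy on the space of probability measures on the torus equipped with the 2-Wasserstein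 metric.) -/
open Set Metric Filter
open scoped ENNReal Topology

/-!
Every path from `μ` to `ν` crosses the sphere of radius `min R d(μ, ν)` around `μ`, on which the
lower semicontinuous `I` attains a minimum `> I μ`; so `c > I μ`, and the geodesic from `μ` to `ν`
shows `c < ∞`. Put `κ = max 0 (-λ)` and call `x` `σ`-almost critical if
`I x ≤ I y + σ d(x,y) + κ/2 d(x,y)²` for all `y`; for `σ = 0` both slopes vanish at `x`.

If for every `σ > 0` the strip `|I - c| ≤ σ` contains a `σ`-almost critical point, a limit point of
such points (compactness) is `0`-almost critical at level `c`. Otherwise fix a `σ` for which it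
contains none. Minimising `max I (c - ε) + σ d(·, x)` (an Ekeland-type argument) then moves every
`x` with `I x ≤ c + ε` into `{I ≤ c - ε}` by a distance `≤ 2ε/σ`. Subdivide a path of level
`< c + ε` finely, move its nodes down, and reconnect consecutive nodes by geodesics: by
`λ`-convexity these rise by at most `κ/8 (8ε/σ)² < ε` above `c - ε`, giving a path of level `< c`.
-/

section MountainPass

variable {X : Type*} [MetricSpace X]

noncomputable def mountainPassLevel (I : X → EReal) (μ ν : X) : EReal :=
  sInf {a : EReal | ∃ γ : ℝ → X, ContinuousOn γ (Icc 0 1) ∧ γ 0 = μ ∧ γ 1 = ν ∧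
    a = ⨆ t ∈ Icc (0:ℝ) 1, I (γ t)}

/-- For a `(-κ)`-convex `I` and `σ = 0` this is the criticality condition `|∂I|(x) = 0`. -/
def IsAlmostCritical (I : X → EReal) (κ σ : ℝ) (x : X) : Prop :=
  ∀ y, I x ≤ I y + ((σ * dist x y + κ / 2 * dist x y ^ 2 : ℝ) : EReal)

variable {I : X → EReal}

lemma GeodesicallyConvex.mono {lam lam' : ℝ} (hI : GeodesicallyConvex I lam) (hle : lam' ≤ lam) :
    GeodesicallyConvex I lam' := by
  intro x₀ x₁ h₀ h₁ γ hγ t ht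
  refine (hI x₀ x₁ h₀ h₁ γ hγ t ht).trans (EReal.sub_le_sub le_rfl (EReal.coe_le_coe_iff.2 ?_))
  have : 0 ≤ t * (1 - t) * dist x₀ x₁ ^ 2 :=
    mul_nonneg (mul_nonneg ht.1 (sub_nonneg.2 ht.2)) (sq_nonneg _)
  nlinarith

lemma GeodesicallyConvex.apply_le {lam : ℝ} (hI : GeodesicallyConvex I lam) {γ : ℝ → X}
    {a b : X} (hγ : IsUnitSpeedGeodesic γ a b) {A B : ℝ} (ha : I a ≤ A) (hb : I b ≤ B) {t : ℝ}
    (ht : t ∈ Icc (0:ℝ) 1) :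
    I (γ t) ≤ (((1 - t) * A + t * B - lam / 2 * t * (1 - t) * dist a b ^ 2 : ℝ) : EReal) := by
  refine (hI a b (ne_top_of_le_ne_top (EReal.coe_ne_top _) ha)
    (ne_top_of_le_ne_top (EReal.coe_ne_top _) hb) γ hγ t ht).trans ?_
  have h₀ : (0 : EReal) ≤ ((1 - t : ℝ) : EReal) := EReal.coe_nonneg.2 (by linarith [ht.2])
  have h₁ : (0 : EReal) ≤ ((t : ℝ) : EReal) := EReal.coe_nonneg.2 ht.1
  push_cast
  exact EReal.sub_le_sub (add_le_add (mul_le_mul_of_nonneg_left ha h₀)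
    (mul_le_mul_of_nonneg_left hb h₁)) le_rfl

lemma joinedIn_sublevel_of_dist_le (hgeo : IsGeodesicSpace X) {κ : ℝ}
    (hI : GeodesicallyConvex I (-κ)) (hκ : 0 ≤ κ) {a b : X} {β D : ℝ} (ha : I a ≤ β)
    (hb : I b ≤ β) (hab : dist a b ≤ D) :
    JoinedIn {x | I x ≤ ((β + κ / 8 * D ^ 2 : ℝ) : EReal)} a b := by
  obtain ⟨γ, hγ⟩ := hgeo a b
  refine JoinedIn.ofLine hγ.1 hγ.2.1 hγ.2.2.1 ?_
  rintro _ ⟨t, ht, rfl⟩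
  refine (hI.apply_le hγ ha hb ht).trans (EReal.coe_le_coe_iff.2 ?_)
  have hquarter : t * (1 - t) ≤ 1 / 4 := by nlinarith [sq_nonneg (t - 1 / 2)]
  have hd : dist a b ^ 2 ≤ D ^ 2 := pow_le_pow_left₀ dist_nonneg hab 2
  nlinarith [mul_le_mul hquarter hd (sq_nonneg _) (by norm_num),
    mul_nonneg ht.1 (sub_nonneg.2 ht.2)]

lemma joinedIn_of_forall_lt_succ {Y : Type*} [TopologicalSpace Y] {F : Set Y} {s : ℕ → Y}
    (h₀ : s 0 ∈ F) {N : ℕ} (h : ∀ i < N, JoinedIn F (s i) (s (i + 1))) :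
    JoinedIn F (s 0) (s N) := by
  induction N with
  | zero => exact JoinedIn.refl h₀
  | succ n ih => exact (ih fun i hi => h i (by omega)).trans (h n (by omega))

lemma Path.exists_chain_dist_lt {a b : X} (γ : Path a b) {η : ℝ} (hη : 0 < η) :
    ∃ (N : ℕ) (p : ℕ → X), p 0 = a ∧ p N = b ∧ (∀ i, p i ∈ range γ) ∧
      ∀ i < N, dist (p i) (p (i + 1)) < η := by
  obtain ⟨δ, hδ, hγδ⟩ := Metric.uniformContinuous_iff.1
    (CompactSpace.uniformContinuous_of_continuous γ.continuous) η hη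
  obtain ⟨n, hn⟩ := exists_nat_one_div_lt hδ
  refine ⟨n + 1, fun i => γ.extend (i / (n + 1 : ℕ)), by simp,
    by simp [div_self (Nat.cast_add_one_ne_zero (R := ℝ) n)], fun i => ⟨_, rfl⟩,
    fun i _ => hγδ ?_⟩
  refine (Set.abs_projIcc_sub_projIcc _).trans_lt ?_
  rw [show ((i : ℕ) : ℝ) / ((n + 1 : ℕ) : ℝ) - ((i + 1 : ℕ) : ℝ) / ((n + 1 : ℕ) : ℝ)
      = -(1 / (n + 1)) by push_cast; field_simp; ring, abs_neg, abs_of_pos (by positivity)]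
  exact hn

lemma mountainPassLevel_le_of_joinedIn {μ ν : X} {b : EReal} (h : JoinedIn {x | I x ≤ b} μ ν) :
    mountainPassLevel I μ ν ≤ b := by
  obtain ⟨γ, hγ⟩ := h
  refine sInf_le_of_le ⟨γ.extend, γ.continuous_extend.continuousOn, γ.extend_zero,
    γ.extend_one, rfl⟩ (iSup₂_le fun t ht => ?_)
  rw [γ.extend_apply ht]
  exact hγ _

lemma joinedIn_of_mountainPassLevel_lt {μ ν : X} {b : EReal} (h : mountainPassLevel I μ ν < b) :
    JoinedIn {x | I x ≤ b} μ ν := by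
  obtain ⟨_, ⟨γ, hγc, hγ0, hγ1, rfl⟩, hlt⟩ := sInf_lt_iff.1 h
  exact JoinedIn.ofLine hγc hγ0 hγ1 fun _ ⟨t, ht, hx⟩ =>
    hx ▸ ((le_biSup (fun t => I (γ t)) ht).trans hlt.le)

lemma le_mountainPassLevel {μ ν : X} {b : EReal} (h : ∀ γ : Path μ ν, ∃ t, b ≤ I (γ t)) :
    b ≤ mountainPassLevel I μ ν := by
  refine le_sInf ?_
  rintro _ ⟨γ, hγc, hγ0, hγ1, rfl⟩
  obtain ⟨t, ht⟩ := h (Path.ofLine hγc hγ0 hγ1)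
  exact ht.trans (le_biSup (fun t => I (γ t)) t.2)

lemma IsGeodesicSpace.sphere_nonempty (hgeo : IsGeodesicSpace X) (x y : X) {r : ℝ} (hr : 0 ≤ r)
    (hry : r ≤ dist x y) : (sphere x r).Nonempty := by
  obtain ⟨γ, hγc, hγ0, -, hγd⟩ := hgeo x y
  have ht : r / dist x y ∈ Icc (0:ℝ) 1 := ⟨by positivity, div_le_one_of_le₀ hry dist_nonneg⟩
  refine ⟨γ (r / dist x y), ?_⟩
  have hγt := hγd _ ht 0 ⟨le_rfl, zero_le_one⟩
  rw [hγ0, sub_zero, abs_of_nonneg ht.1] at hγt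
  rw [mem_sphere, hγt]
  rcases (dist_nonneg (x := x) (y := y)).eq_or_lt with h | h
  · rw [← h] at hry ⊢
    simp [le_antisymm hry hr]
  · exact div_mul_cancel₀ r h.ne'

lemma lt_mountainPassLevel_of_lt_on_sphere [CompactSpace X] (hlsc : LowerSemicontinuous I)
    {μ ν : X} {r : ℝ} (hr : 0 ≤ r) (hrν : r ≤ dist ν μ) (hs : (sphere μ r).Nonempty)
    (h : ∀ η ∈ sphere μ r, I μ < I η) : I μ < mountainPassLevel I μ ν := by
  obtain ⟨η₀, hη₀, hmin⟩ :=
    (hlsc.lowerSemicontinuousOn _).exists_isMinOn hs isClosed_sphere.isCompact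
  refine (h η₀ hη₀).trans_le (le_mountainPassLevel fun γ => ?_)
  have hf : Continuous fun t => dist (γ t) μ := by fun_prop
  obtain ⟨t, ht⟩ := intermediate_value_univ 0 1 hf ⟨by simpa using hr, by simpa using hrν⟩
  exact ⟨t, isMinOn_iff.1 hmin _ ht⟩

lemma GeodesicallyConvex.apply_lt_of_lt {κ : ℝ} (hI : GeodesicallyConvex I (-κ)) (hκ : 0 ≤ κ)
    {γ : ℝ → X} {z y : X} (hγ : IsUnitSpeedGeodesic γ z y) {Z B σ : ℝ} (hz : I z ≤ Z)
    (hy : I y ≤ B) (hB : B + σ * dist z y + κ / 2 * dist z y ^ 2 < Z) {t : ℝ}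
    (ht : t ∈ Ioc (0:ℝ) 1) : I (γ t) < ((Z - σ * (t * dist z y) : ℝ) : EReal) := by
  refine (hI.apply_le hγ hz hy ⟨ht.1.le, ht.2⟩).trans_lt (EReal.coe_lt_coe_iff.2 ?_)
  nlinarith [mul_pos ht.1 (sub_pos.2 hB), mul_nonneg (mul_nonneg hκ (sq_nonneg (dist z y)))
    (mul_self_nonneg t)]

/-- Ekeland-type step: if the minimiser `z` of `max I β + σ d(·, x)` were not `σ`-almost critical,
moving from `z` a short way along the geodesic towards a witness `y` would lower the penalised
functional. -/
lemma isAlmostCritical_of_forall_le_penalized (hgeo : IsGeodesicSpace X) (hbot : ∀ x, I x ≠ ⊥)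
    {κ : ℝ} (hI : GeodesicallyConvex I (-κ)) (hκ : 0 ≤ κ) {β σ : ℝ} (hσ : 0 ≤ σ) {x z : X}
    (hz : ∀ w, max (I z) β + ((σ * dist z x : ℝ) : EReal) ≤
      max (I w) β + ((σ * dist w x : ℝ) : EReal))
    (hβz : (β : EReal) < I z) : IsAlmostCritical I κ σ z := by
  intro y
  by_contra! hy
  have hyt : I y ≠ ⊤ := fun h => by
    rw [h, EReal.top_add_coe] at hy
    exact not_top_lt hy
  obtain ⟨B, hB⟩ : ∃ B : ℝ, I y = B := ⟨_, (EReal.coe_toReal hyt (hbot y)).symm⟩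
  have hzt : I z ≠ ⊤ := fun h => by
    have := hz y
    rw [h, hB, ← EReal.coe_strictMono.monotone.map_max, ← EReal.coe_add, max_eq_left le_top,
      EReal.top_add_coe, top_le_iff] at this
    exact EReal.coe_ne_top _ this
  obtain ⟨Z, hZ⟩ : ∃ Z : ℝ, I z = Z := ⟨_, (EReal.coe_toReal hzt (hbot z)).symm⟩
  rw [hB, hZ, ← EReal.coe_add, EReal.coe_lt_coe_iff] at hy
  rw [hZ, EReal.coe_lt_coe_iff] at hβz
  obtain ⟨γ, hγ⟩ := hgeo z y
  set d := dist z y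
  set t := min 1 ((Z - β) / (σ * d + 1))
  have ht : t ∈ Ioc (0:ℝ) 1 :=
    ⟨lt_min one_pos (div_pos (by linarith) (by positivity)), min_le_left _ _⟩
  have htd : t * (σ * d + 1) ≤ Z - β := (le_div_iff₀ (by positivity)).1 (min_le_right _ _)
  have hdrop := hI.apply_lt_of_lt hκ hγ hZ.le hB.le (σ := σ) (by linarith) ht
  obtain ⟨G, hG⟩ : ∃ G : ℝ, I (γ t) = G :=
    ⟨_, (EReal.coe_toReal (ne_top_of_lt hdrop) (hbot _)).symm⟩
  rw [hG, EReal.coe_lt_coe_iff] at hdrop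
  have hγt : dist (γ t) z = t * d := by
    simpa [hγ.2.1, abs_of_pos ht.1] using hγ.2.2.2 t ⟨ht.1.le, ht.2⟩ 0 ⟨le_rfl, zero_le_one⟩
  have hmin := hz (γ t)
  rw [hZ, hG, ← EReal.coe_strictMono.monotone.map_max, ← EReal.coe_strictMono.monotone.map_max,
    ← EReal.coe_add, ← EReal.coe_add, EReal.coe_le_coe_iff, max_eq_left hβz.le] at hmin
  have hx : σ * dist (γ t) x ≤ σ * (t * d) + σ * dist z x := by
    rw [← mul_add, ← hγt]
    exact mul_le_mul_of_nonneg_left (dist_triangle _ _ _) hσ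
  have hβ : β < Z - σ * (t * d) := by
    have : σ * (t * d) + t = t * (σ * d + 1) := by ring
    linarith [ht.1]
  linarith [max_lt hdrop hβ]

lemma exists_dist_le_of_not_isAlmostCritical [CompactSpace X] (hgeo : IsGeodesicSpace X)
    (hlsc : LowerSemicontinuous I) (hbot : ∀ x, I x ≠ ⊥) {κ : ℝ}
    (hI : GeodesicallyConvex I (-κ)) (hκ : 0 ≤ κ) {β b σ : ℝ} (hσ : 0 < σ) (hβb : β ≤ b)
    (hcrit : ∀ z, (β : EReal) < I z → I z ≤ b → ¬ IsAlmostCritical I κ σ z) {x : X}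
    (hx : I x ≤ b) : ∃ z, I z ≤ β ∧ σ * dist x z ≤ b - β := by
  set F : X → EReal := fun w => max (I w) β + ((σ * dist w x : ℝ) : EReal)
  have hF : LowerSemicontinuous F :=
    (hlsc.sup lowerSemicontinuous_const).add'
      (continuous_coe_real_ereal.comp (by fun_prop)).lowerSemicontinuous
      fun _ => EReal.continuousAt_add (.inr (EReal.coe_ne_bot _)) (.inr (EReal.coe_ne_top _))
  obtain ⟨z, -, hzmin⟩ :=
    (hF.lowerSemicontinuousOn _).exists_isMinOn ⟨x, mem_univ x⟩ isCompact_univ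
  replace hzmin := isMinOn_univ_iff.1 hzmin
  have hFz : F z ≤ b := (hzmin x).trans (by simpa [F] using ⟨hx, hβb⟩)
  have hIz : I z ≤ β := by
    by_contra! h
    refine hcrit z h ((le_max_left _ _).trans ((le_add_of_nonneg_right ?_).trans hFz))
      (isAlmostCritical_of_forall_le_penalized hgeo hbot hI hκ hσ.le hzmin h)
    exact EReal.coe_nonneg.2 (by positivity)
  refine ⟨z, hIz, ?_⟩
  have : ((β + σ * dist z x : ℝ) : EReal) ≤ b := by
    rw [EReal.coe_add]
    exact (add_le_add (le_max_right (I z) _) le_rfl).trans hFz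
  rw [dist_comm]
  linarith [EReal.coe_le_coe_iff.1 this]

lemma exists_isAlmostCritical_zero_of_forall_pos [CompactSpace X] (hlsc : LowerSemicontinuous I)
    {κ c : ℝ} (h : ∀ σ > 0, ∃ x, ((c - σ : ℝ) : EReal) ≤ I x ∧ I x ≤ ((c + σ : ℝ) : EReal) ∧
      IsAlmostCritical I κ σ x) :
    ∃ x, I x = c ∧ IsAlmostCritical I κ 0 x := by
  choose x hlow hup hcrit using fun n : ℕ => h (1 / (n + 1)) Nat.one_div_pos_of_nat
  obtain ⟨a, φ, hφ, hxa⟩ := CompactSpace.tendsto_subseq x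
  have hσ : Tendsto (fun n => 1 / ((φ n : ℝ) + 1)) atTop (𝓝 0) :=
    tendsto_one_div_add_atTop_nhds_zero_nat.comp hφ.tendsto_atTop
  have hlower : ∀ y, ((c - κ / 2 * dist a y ^ 2 : ℝ) : EReal) ≤ I y := by
    intro y
    have hd : Tendsto (fun n => dist (x (φ n)) y) atTop (𝓝 (dist a y)) :=
      hxa.dist tendsto_const_nhds
    have hlim : Tendsto (fun n => c - 1 / ((φ n : ℝ) + 1) - (1 / ((φ n : ℝ) + 1) *
        dist (x (φ n)) y + κ / 2 * dist (x (φ n)) y ^ 2)) atTop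
        (𝓝 (c - κ / 2 * dist a y ^ 2)) := by
      simpa using (tendsto_const_nhds.sub hσ).sub ((hσ.mul hd).add ((hd.pow 2).const_mul _))
    refine le_of_tendsto' ((continuous_coe_real_ereal.tendsto _).comp hlim) fun n => ?_
    rw [Function.comp_apply, EReal.coe_sub]
    exact EReal.sub_le_of_le_add ((hlow (φ n)).trans (hcrit (φ n) y))
  have hIa : I a = c := by
    refine le_antisymm ?_ (by simpa using hlower a)
    have hup' : Tendsto (fun n => (((c + 1 / ((φ n : ℝ) + 1)) : ℝ) : EReal)) atTop (𝓝 c) :=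
      (continuous_coe_real_ereal.tendsto _).comp (by simpa using tendsto_const_nhds.add hσ)
    exact hlsc.isClosed_epigraph.mem_of_tendsto (hxa.prodMk_nhds hup')
      (Eventually.of_forall fun n => hup (φ n))
  refine ⟨a, hIa, fun y => ?_⟩
  rw [hIa, zero_mul, zero_add, ← EReal.sub_le_iff_le_add (.inl (EReal.coe_ne_bot _))
    (.inl (EReal.coe_ne_top _)), ← EReal.coe_sub]
  exact hlower y

lemma joinedIn_sublevel_of_forall_exists_dist_le (hgeo : IsGeodesicSpace X) {κ : ℝ}
    (hI : GeodesicallyConvex I (-κ)) (hκ : 0 ≤ κ) {β b r D : ℝ} (hD : 2 * r < D)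
    (hnear : ∀ x, I x ≤ b → ∃ z, I z ≤ β ∧ dist x z ≤ r) {μ ν : X} (hμ : I μ ≤ β)
    (hν : I ν ≤ β) (hμν : JoinedIn {x | I x ≤ b} μ ν) :
    JoinedIn {x | I x ≤ ((β + κ / 8 * D ^ 2 : ℝ) : EReal)} μ ν := by
  obtain ⟨γ, hγ⟩ := hμν
  obtain ⟨N, p, hp0, hpN, hpγ, hstep⟩ := γ.exists_chain_dist_lt (sub_pos.2 hD)
  have : ∀ i, ∃ z, I z ≤ β ∧ dist (p i) z ≤ r := fun i => hnear _ <| by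
    obtain ⟨t, ht⟩ := hpγ i
    exact ht ▸ hγ t
  choose s hsβ hsr using this
  have hr : 0 ≤ r := dist_nonneg.trans (hsr 0)
  have hseg : ∀ {a b : X}, I a ≤ β → I b ≤ β → dist a b ≤ D →
      JoinedIn {x | I x ≤ ((β + κ / 8 * D ^ 2 : ℝ) : EReal)} a b :=
    joinedIn_sublevel_of_dist_le hgeo hI hκ
  have hs0 := hseg hμ (hsβ 0) (by rw [← hp0]; linarith [hsr 0])
  have hsN := hseg (hsβ N) hν (by rw [← hpN, dist_comm]; linarith [hsr N])
  refine (hs0.trans (joinedIn_of_forall_lt_succ hs0.target_mem fun i hi => ?_)).trans hsN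
  refine hseg (hsβ i) (hsβ (i + 1)) ?_
  calc dist (s i) (s (i + 1)) ≤ dist (s i) (p i) + dist (p i) (p (i + 1)) +
        dist (p (i + 1)) (s (i + 1)) := dist_triangle4 _ _ _ _
    _ ≤ D := by linarith [dist_comm (s i) (p i) ▸ hsr i, hstep i hi, hsr (i + 1)]

lemma metricSlope_le_of_isAlmostCritical {κ σ : ℝ} {x : X} (hx : I x ≠ ⊤) (hκ : 0 ≤ κ)
    (hσ : 0 ≤ σ) (h : IsAlmostCritical I κ σ x) : metricSlope I x ≤ ENNReal.ofReal σ := by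
  rw [metricSlope, if_neg hx]
  rcases eq_or_neBot (𝓝[≠] x) with hbot | _
  · simp [hbot]
  have hbound : ∀ y ≠ x, (max (I x - I y) 0).toReal / dist x y ≤ σ + κ / 2 * dist x y := by
    intro y hy
    have hd : 0 < dist x y := dist_pos.2 hy.symm
    have hmax : max (I x - I y) 0 ≤ ((σ * dist x y + κ / 2 * dist x y ^ 2 : ℝ) : EReal) :=
      max_le (EReal.sub_le_of_le_add (add_comm (I y) _ ▸ h y))
        (EReal.coe_nonneg.2 (by positivity))
    calc (max (I x - I y) 0).toReal / dist x y
        ≤ (σ * dist x y + κ / 2 * dist x y ^ 2) / dist x y := by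
          gcongr
          simpa only [EReal.toReal_coe] using
            EReal.toReal_le_toReal hmax (by simp) (EReal.coe_ne_top _)
      _ = σ + κ / 2 * dist x y := by field_simp
  have htend : Tendsto (fun y => σ + κ / 2 * dist x y) (𝓝 x) (𝓝 (σ + κ / 2 * dist x x)) :=
    tendsto_const_nhds.add ((tendsto_const_nhds.dist tendsto_id).const_mul _)
  rw [dist_self, mul_zero, add_zero] at htend
  calc _ ≤ limsup (fun y => ENNReal.ofReal (σ + κ / 2 * dist x y)) (𝓝[≠] x) :=
        limsup_le_limsup (eventually_nhdsWithin_of_forall fun y hy =>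
          ENNReal.ofReal_le_ofReal (hbound y hy))
    _ = ENNReal.ofReal σ := ((ENNReal.tendsto_ofReal htend).mono_left nhdsWithin_le_nhds).limsup_eq

lemma weakSlope_epiExt_le_of_isAlmostCritical {κ σ c : ℝ} {x : X} (hc : I x = c) (hκ : 0 ≤ κ)
    (hσ : 0 ≤ σ) (h : IsAlmostCritical I κ σ x) :
    weakSlope (epiExt I) (Epi.mk' I x c hc.le) ≤ ENNReal.ofReal σ := by
  refine iSup₂_le fun δ ⟨_, U, hU, α, hα, ψ, _, hψ⟩ => ENNReal.ofReal_le_ofReal ?_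
  set p := Epi.mk' I x c hc.le
  have hδ : ∀ t ∈ Ioc (0:ℝ) α, δ ≤ σ + κ / 2 * t := by
    intro t ht
    obtain ⟨hdist, hδt⟩ := hψ p (mem_of_mem_nhds hU) t ⟨ht.1.le, ht.2⟩
    set q := ψ p t
    have hyx : dist x (Epi.pt q) ≤ t := dist_comm x _ ▸ (WithLp.dist_fst_le q.1 p.1).trans hdist
    have hcq : (c : EReal) ≤ ((epiExt I q + (σ * dist x (Epi.pt q) +
        κ / 2 * dist x (Epi.pt q) ^ 2) : ℝ) : EReal) := by
      rw [← hc, EReal.coe_add]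
      exact (h _).trans (add_le_add q.2 le_rfl)
    have hpc : epiExt I p = c := rfl
    rw [EReal.coe_le_coe_iff] at hcq
    have hsq : dist x (Epi.pt q) ^ 2 ≤ t ^ 2 := pow_le_pow_left₀ dist_nonneg hyx 2
    have : δ * t ≤ (σ + κ / 2 * t) * t := by nlinarith
    exact le_of_mul_le_mul_right this ht.1
  refine ge_of_tendsto ?_ (eventually_mem_set.2 (Ioc_mem_nhdsGT hα) |>.mono hδ)
  exact ((continuous_const.add (continuous_const.mul continuous_id)).tendsto' 0 σ
    (by simp)).mono_left nhdsWithin_le_nhds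

lemma lscWeakSlope_eq_zero_of_isAlmostCritical {κ : ℝ} {x : X} (hxt : I x ≠ ⊤) (hxb : I x ≠ ⊥)
    (hκ : 0 ≤ κ) (h : IsAlmostCritical I κ 0 x) : lscWeakSlope I x = 0 := by
  have hc : I x = ((I x).toReal : EReal) := (EReal.coe_toReal hxt hxb).symm
  have hs := weakSlope_epiExt_le_of_isAlmostCritical hc hκ le_rfl h
  rw [ENNReal.ofReal_zero, nonpos_iff_eq_zero] at hs
  rw [lscWeakSlope, dif_pos hc.le]
  simp [hs]

theorem exists_isAlmostCritical_of_mountainPassLevel [CompactSpace X] (hgeo : IsGeodesicSpace X)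
    (hlsc : LowerSemicontinuous I) (hbot : ∀ x, I x ≠ ⊥) {κ : ℝ}
    (hI : GeodesicallyConvex I (-κ)) (hκ : 0 ≤ κ) {μ ν : X} {β c : ℝ}
    (hc : mountainPassLevel I μ ν = c) (hβc : β < c) (hμ : I μ ≤ β) (hν : I ν ≤ β) :
    ∃ x, I x = c ∧ IsAlmostCritical I κ 0 x := by
  by_contra hno
  obtain ⟨σ, hσ, hstrip⟩ : ∃ σ > 0, ∀ x, ((c - σ : ℝ) : EReal) ≤ I x →
      I x ≤ ((c + σ : ℝ) : EReal) → ¬ IsAlmostCritical I κ σ x := by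
    by_contra! h
    exact hno (exists_isAlmostCritical_zero_of_forall_pos hlsc h)
  obtain ⟨ε, hε, hεσ, hεβ, hεκ⟩ : ∃ ε > 0, ε ≤ σ ∧ ε ≤ c - β ∧ 8 * κ * ε < σ ^ 2 := by
    have hκε : ∀ᶠ ε in 𝓝 (0:ℝ), 8 * κ * ε < σ ^ 2 :=
      ((continuous_const.mul continuous_id).tendsto' 0 0 (by simp)).eventually
        (eventually_lt_nhds (by positivity))
    have h : ∀ᶠ ε in 𝓝[>] (0:ℝ), 0 < ε ∧ ε ≤ σ ∧ ε ≤ c - β ∧ 8 * κ * ε < σ ^ 2 :=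
      eventually_mem_nhdsWithin.and (nhdsWithin_le_nhds ((eventually_le_nhds hσ).and
        ((eventually_le_nhds (sub_pos.2 hβc)).and hκε)))
    exact h.exists
  have hnear : ∀ x, I x ≤ ((c + ε : ℝ) : EReal) →
      ∃ z, I z ≤ ((c - ε : ℝ) : EReal) ∧ dist x z ≤ 2 * ε / σ := by
    intro x hx
    obtain ⟨z, hz, hxz⟩ := exists_dist_le_of_not_isAlmostCritical hgeo hlsc hbot hI hκ hσ
      (β := c - ε) (b := c + ε) (by linarith)
      (fun z h₁ h₂ => hstrip z ((EReal.coe_le_coe_iff.2 (by linarith)).trans h₁.le)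
        (h₂.trans (EReal.coe_le_coe_iff.2 (by linarith)))) hx
    exact ⟨z, hz, by rw [le_div_iff₀ hσ]; linarith⟩
  have hD : 2 * (2 * ε / σ) < 8 * ε / σ := by
    rw [← mul_div_assoc]
    exact div_lt_div_of_pos_right (by linarith) hσ
  have hlevel := mountainPassLevel_le_of_joinedIn <|
    joinedIn_sublevel_of_forall_exists_dist_le hgeo hI hκ hD hnear
      (hμ.trans (EReal.coe_le_coe_iff.2 (by linarith)))
      (hν.trans (EReal.coe_le_coe_iff.2 (by linarith)))
      (joinedIn_of_mountainPassLevel_lt (hc ▸ EReal.coe_lt_coe_iff.2 (lt_add_of_pos_right c hε)))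
  rw [hc, EReal.coe_le_coe_iff] at hlevel
  have hbump : κ / 8 * (8 * ε / σ) ^ 2 < ε := by
    have : κ / 8 * (8 * ε / σ) ^ 2 = ε * (8 * κ * ε / σ ^ 2) := by field_simp
    rw [this]
    exact mul_lt_of_lt_one_right hε ((div_lt_one (by positivity)).2 hεκ)
  linarith

end MountainPass

theorem mountain_pass_at_strict_local_min_general {X : Type*} [MetricSpace X] [CompactSpace X]
    (hgeo : IsGeodesicSpace X)
    (I : X → EReal) (hbot : ∀ x, I x ≠ ⊥)
    (hlsc : LowerSemicontinuous I)
    (lam : ℝ) (hconv : GeodesicallyConvex I lam)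
    (μ ν : X) (hμ : I μ ≠ ⊤) (hne : ν ≠ μ)
    (R : ℝ) (hR : 0 < R)
    (hstrict : ∀ η : X, η ≠ μ → dist η μ ≤ R → I μ < I η)
    (hIν : I ν ≤ I μ)
    (c : EReal)
    (hc : c = sInf {a : EReal | ∃ γ : ℝ → X, ContinuousOn γ (Icc 0 1) ∧ γ 0 = μ ∧ γ 1 = ν ∧
        a = ⨆ t ∈ Icc (0:ℝ) 1, I (γ t)}) :
    I μ < c ∧
    ∃ μs : X, μs ≠ μ ∧ μs ≠ ν ∧ metricSlope I μs = 0 ∧ lscWeakSlope I μs = 0 ∧ I μs = c := by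
  obtain ⟨κ, hκ, hI⟩ : ∃ κ, 0 ≤ κ ∧ GeodesicallyConvex I (-κ) :=
    ⟨-min lam 0, neg_nonneg.2 (min_le_right _ _),
      by rw [neg_neg]; exact hconv.mono (min_le_left _ _)⟩
  have hc' : mountainPassLevel I μ ν = c := hc.symm
  have hr : 0 < min R (dist ν μ) := lt_min hR (dist_pos.2 hne)
  have hμc : I μ < c := hc' ▸ lt_mountainPassLevel_of_lt_on_sphere hlsc hr.le (min_le_right _ _)
    (hgeo.sphere_nonempty μ ν hr.le (dist_comm ν μ ▸ min_le_right _ _)) fun η hη =>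
      hstrict η (ne_of_mem_sphere hη hr.ne') ((mem_sphere.1 hη).le.trans (min_le_left _ _))
  obtain ⟨m, hm⟩ : ∃ m : ℝ, I μ = m := ⟨_, (EReal.coe_toReal hμ (hbot μ)).symm⟩
  have hcle : c ≤ ((m + κ / 8 * dist μ ν ^ 2 : ℝ) : EReal) := hc' ▸ mountainPassLevel_le_of_joinedIn
    (joinedIn_sublevel_of_dist_le hgeo hI hκ hm.le (hIν.trans hm.le) le_rfl)
  lift c to ℝ using ⟨ne_top_of_le_ne_top (EReal.coe_ne_top _) hcle, ne_bot_of_gt hμc⟩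
  obtain ⟨x, hxc, hx⟩ := exists_isAlmostCritical_of_mountainPassLevel hgeo hlsc hbot hI hκ hc'
    (EReal.coe_lt_coe_iff.1 (hm ▸ hμc)) hm.le (hIν.trans hm.le)
  refine ⟨hμc, x, ?_, ?_, ?_, ?_, hxc⟩
  · rintro rfl
    exact hμc.ne hxc
  · rintro rfl
    exact (hIν.trans_lt hμc).ne hxc
  · simpa using metricSlope_le_of_isAlmostCritical (hxc ▸ EReal.coe_ne_top c) hκ le_rfl hx
  · exact lscWeakSlope_eq_zero_of_isAlmostCritical (hxc ▸ EReal.coe_ne_top c)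
      (hxc ▸ EReal.coe_ne_bot c) hκ hx

/-- Abstract form of Theorem 1.2: for a proper, l.s.c., `λ`-geodesically convex functional `I`
on a compact geodesic metric space (such as the McKean–Vlasov free energy on `P(T^d_L)` with the
`2`-Wasserstein metric), if `μ ∈ D(I)` is a strict local minimum of `I` and `ν ∈ D(I)`, `ν ≠ μ`,
satisfies `I ν ≤ I μ`, then the mountain pass level `c` between `μ` and `ν` satisfies
`c > I μ` and is attained at a critical point `μ*` distinct from `μ` and `ν`. -/
theorem mountain_pass_at_strict_local_min {X : Type*} [MetricSpace X] [CompactSpace X]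
    (hgeo : IsGeodesicSpace X)
    (I : X → EReal) (hproper : ∃ x, I x ≠ ⊤) (hbot : ∀ x, I x ≠ ⊥)
    (hlsc : LowerSemicontinuous I)
    (lam : ℝ) (hconv : GeodesicallyConvex I lam)
    (μ ν : X) (hμ : I μ ≠ ⊤) (hν : I ν ≠ ⊤) (hne : ν ≠ μ)
    (R : ℝ) (hR : 0 < R)
    (hstrict : ∀ η : X, η ≠ μ → dist η μ ≤ R → I μ < I η)
    (hIν : I ν ≤ I μ)
    (c : EReal)
    (hc : c = sInf {a : EReal | ∃ γ : ℝ → X, ContinuousOn γ (Icc 0 1) ∧ γ 0 = μ ∧ γ 1 = ν ∧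
        a = ⨆ t ∈ Icc (0:ℝ) 1, I (γ t)}) :
    I μ < c ∧
    ∃ μs : X, μs ≠ μ ∧ μs ≠ ν ∧ metricSlope I μs = 0 ∧ lscWeakSlope I μs = 0 ∧ I μs = c :=
  mountain_pass_at_strict_local_min_general hgeo I hbot hlsc lam hconv μ ν hμ hne R hR hstrict hIν c
    hc
end
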